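/- arXiv:1304.3198 — 2 statements merged into one kernel-verified Lean document; each statement's English description precedes it below -/
import Mathlib

section
/- Let 1 < α < 2, 0 < p < α − 1 and T > 0. Let X be a Banach space, let M₁ : [0, T] → [0, ∞) be measurable with M₁ ∈ L^{1/p}([0, T]), and let f : [0, T] → X be strongly (Bochner) measurable with ‖f(s)‖ ≤ M₁(s) for almost every s ∈ [0, T]. Define G(t) = ∫₀^t (t − s)^{α−2} f(s) ds for t ∈ [0, T]. Then for all 0 ≤ τ₁ ≤ τ₂ ≤ T, ‖G(τ₂) − G(τ₁)‖ ≤ 2 ((1 − p)/(α − 1 − p))^{1−p} · ‖M₁‖_{1/p} · (τ₂ − τ₁)^{α−1−p}; in particular G is Hölder continuous on [0, T] with exponent α − 1 − p. -/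
/-!
Write `c = α - 2` and `P = 1 / (1 - p)`, the Hölder conjugate of `1 / p`. Then
`G τ₂ - G τ₁ = ∫_{τ₁}^{τ₂} (τ₂ - s)^c f s - ∫_0^{τ₁} ((τ₁ - s)^c - (τ₂ - s)^c) f s`,
and Hölder's inequality bounds each term by `(∫ k^P)^(1-p) ‖M₁‖_{1/p}` for its kernel `k`.
Both kernels satisfy `∫ k^P ≤ (τ₂ - τ₁)^r / r` with `r = c P + 1 = (α - 1 - p) / (1 - p) > 0`:
the first by direct integration, the second because `(x - y)^P ≤ x^P - y^P` for `P ≥ 1`, after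
which the integral telescopes.
-/

open MeasureTheory Set

theorem Real.rpow_div_div_rpow {D γ q : ℝ} (hD : 0 ≤ D) (hγ : 0 < γ) (hq : 0 < q) :
    (D ^ (γ / q) / (γ / q)) ^ q = (q / γ) ^ q * D ^ γ := by
  rw [div_eq_mul_inv, Real.mul_rpow (by positivity) (by positivity), ← Real.rpow_mul hD,
    div_mul_cancel₀ _ hq.ne', inv_div, mul_comm]

theorem Real.sub_rpow_le_rpow_sub_rpow {a b q : ℝ} (hb : 0 ≤ b) (hba : b ≤ a) (hq : 1 ≤ q) :
    (a - b) ^ q ≤ a ^ q - b ^ q := by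
  have := Real.add_rpow_le_rpow_add (sub_nonneg.2 hba) hb hq
  rw [sub_add_cancel] at this
  linarith

theorem ae_restrict_Ioc_of_forall_mem_Ioo {P : ℝ → Prop} {a b : ℝ} (h : ∀ x ∈ Ioo a b, P x) :
    ∀ᵐ x ∂volume.restrict (Ioc a b), P x := by
  rw [← Measure.restrict_congr_set Ioo_ae_eq_Ioc]
  exact ae_restrict_of_forall_mem measurableSet_Ioo h

section Holder

variable {Ω X : Type*} [MeasurableSpace Ω] [NormedAddCommGroup X] [NormedSpace ℝ X]
  {μ : Measure Ω} {p : ℝ} {k M : Ω → ℝ} {f : Ω → X}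

theorem memLp_ofReal_of_integrable_rpow {g : Ω → ℝ} {r : ℝ} (hr : 0 < r)
    (hg : AEStronglyMeasurable g μ) (hg0 : 0 ≤ᵐ[μ] g) (hint : Integrable (fun x => g x ^ r) μ) :
    MemLp g (ENNReal.ofReal r) μ := by
  rw [← integrable_norm_rpow_iff hg (by simpa using hr) ENNReal.ofReal_ne_top,
    ENNReal.toReal_ofReal hr.le]
  refine hint.congr ?_
  filter_upwards [hg0] with x hx
  rw [Real.norm_of_nonneg hx]

theorem integrable_smul_of_norm_le (hp0 : 0 < p) (hp1 : p < 1)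
    (hk : AEStronglyMeasurable k μ) (hk0 : 0 ≤ᵐ[μ] k)
    (hkP : Integrable (fun x => k x ^ (1 / (1 - p))) μ)
    (hM : AEStronglyMeasurable M μ) (hM0 : 0 ≤ᵐ[μ] M)
    (hMQ : Integrable (fun x => M x ^ (1 / p)) μ)
    (hf : AEStronglyMeasurable f μ) (hfM : ∀ᵐ x ∂μ, ‖f x‖ ≤ M x) :
    Integrable (fun x => k x • f x) μ := by
  have hkL := memLp_ofReal_of_integrable_rpow (by bound) hk hk0 hkP
  have hfL : MemLp f (ENNReal.ofReal (1 / p)) μ :=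
    (memLp_ofReal_of_integrable_rpow (by positivity) hM hM0 hMQ).of_le hf
      (hfM.mono fun _ hx => hx.trans (le_abs_self _))
  have := (Real.holderConjugate_one_div (sub_pos.2 hp1) hp0 (by ring)).ennrealOfReal
  exact memLp_one_iff_integrable.mp (hfL.smul hkL)

theorem norm_integral_smul_le_of_norm_le (hp0 : 0 < p) (hp1 : p < 1)
    (hk : AEStronglyMeasurable k μ) (hk0 : 0 ≤ᵐ[μ] k)
    (hkP : Integrable (fun x => k x ^ (1 / (1 - p))) μ)
    (hM : AEStronglyMeasurable M μ) (hM0 : 0 ≤ᵐ[μ] M)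
    (hMQ : Integrable (fun x => M x ^ (1 / p)) μ) (hfM : ∀ᵐ x ∂μ, ‖f x‖ ≤ M x) :
    ‖∫ x, k x • f x ∂μ‖ ≤
      (∫ x, k x ^ (1 / (1 - p)) ∂μ) ^ (1 - p) * (∫ x, M x ^ (1 / p) ∂μ) ^ p := by
  have hPQ := Real.holderConjugate_one_div (sub_pos.2 hp1) hp0 (by ring)
  calc ‖∫ x, k x • f x ∂μ‖ ≤ ∫ x, k x * M x ∂μ := by
        refine norm_integral_le_of_norm_le
          (integrable_smul_of_norm_le hp0 hp1 hk hk0 hkP hM hM0 hMQ hM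
            (hM0.mono fun _ hx => (Real.norm_of_nonneg hx).le)) ?_
        filter_upwards [hk0, hfM] with x hk0x hfx
        rw [norm_smul, Real.norm_of_nonneg hk0x]
        exact mul_le_mul_of_nonneg_left hfx hk0x
    _ ≤ _ := by
        simpa only [one_div_one_div] using integral_mul_le_Lp_mul_Lq_of_nonneg hPQ hk0 hM0
          (memLp_ofReal_of_integrable_rpow hPQ.pos hk hk0 hkP)
          (memLp_ofReal_of_integrable_rpow hPQ.symm.pos hM hM0 hMQ)

theorem norm_setIntegral_smul_le_of_subset {s u : Set Ω} (hsu : s ⊆ u) (hp0 : 0 < p)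
    (hp1 : p < 1)
    (hk : AEStronglyMeasurable k (μ.restrict s)) (hk0 : 0 ≤ᵐ[μ.restrict s] k)
    (hkP : IntegrableOn (fun x => k x ^ (1 / (1 - p))) s μ)
    (hM : AEStronglyMeasurable M (μ.restrict u)) (hM0 : 0 ≤ᵐ[μ.restrict u] M)
    (hMQ : IntegrableOn (fun x => M x ^ (1 / p)) u μ) (hfM : ∀ᵐ x ∂μ.restrict u, ‖f x‖ ≤ M x) :
    ‖∫ x in s, k x • f x ∂μ‖ ≤
      (∫ x in s, k x ^ (1 / (1 - p)) ∂μ) ^ (1 - p) * (∫ x in u, M x ^ (1 / p) ∂μ) ^ p := by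
  have hμ : μ.restrict s ≤ μ.restrict u := Measure.restrict_mono hsu le_rfl
  refine (norm_integral_smul_le_of_norm_le hp0 hp1 hk hk0 hkP (hM.mono_measure hμ)
    (ae_mono hμ hM0) (Integrable.mono_measure hMQ hμ) (ae_mono hμ hfM)).trans ?_
  have hMQ0 : 0 ≤ᵐ[μ.restrict u] fun x => M x ^ (1 / p) :=
    hM0.mono fun x hx => Real.rpow_nonneg hx _
  exact mul_le_mul_of_nonneg_left
    (Real.rpow_le_rpow (integral_nonneg_of_ae (ae_mono hμ hMQ0))
      (integral_mono_measure hμ hMQ0 hMQ) hp0.le)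
    (Real.rpow_nonneg (integral_nonneg_of_ae (hk0.mono fun x hx => Real.rpow_nonneg hx _)) _)

end Holder

section Kernel

variable {a b t c P : ℝ}

theorem integrableOn_sub_rpow (hc : -1 < c) : IntegrableOn (fun s => (t - s) ^ c) (Ioc a b) := by
  simpa using
    ((intervalIntegral.intervalIntegrable_rpow' (a := t - b) (b := t - a) hc).comp_sub_left t).2

theorem integral_Ioc_sub_rpow (hc : -1 < c) (hab : a ≤ b) :
    ∫ s in Ioc a b, (t - s) ^ c = ((t - a) ^ (c + 1) - (t - b) ^ (c + 1)) / (c + 1) := by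
  rw [← intervalIntegral.integral_of_le hab, intervalIntegral.integral_comp_sub_left (· ^ c) t,
    integral_rpow (Or.inl hc)]

theorem sub_rpow_rpow_eqOn_Ioc (hbt : b ≤ t) :
    EqOn (fun s => ((t - s) ^ c) ^ P) (fun s => (t - s) ^ (c * P)) (Ioc a b) :=
  fun s hs => (Real.rpow_mul (by linarith [hs.2]) c P).symm

theorem integrableOn_sub_rpow_rpow (hcP : -1 < c * P) (hbt : b ≤ t) :
    IntegrableOn (fun s => ((t - s) ^ c) ^ P) (Ioc a b) :=
  (integrableOn_sub_rpow hcP).congr_fun (sub_rpow_rpow_eqOn_Ioc hbt).symm measurableSet_Ioc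

theorem integral_Ioc_sub_rpow_rpow (hcP : -1 < c * P) (hab : a ≤ b) (hbt : b ≤ t) :
    ∫ s in Ioc a b, ((t - s) ^ c) ^ P =
      ((t - a) ^ (c * P + 1) - (t - b) ^ (c * P + 1)) / (c * P + 1) := by
  rw [setIntegral_congr_fun measurableSet_Ioc (sub_rpow_rpow_eqOn_Ioc hbt),
    integral_Ioc_sub_rpow hcP hab]

-- `s < b` is needed: Lean's `0 ^ c = 0` breaks the inequality at `s = b`.
theorem sub_rpow_le_sub_rpow_of_nonpos (hc : c ≤ 0) (hbt : b ≤ t) {s : ℝ} (hs : s < b) :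
    (t - s) ^ c ≤ (b - s) ^ c :=
  Real.rpow_le_rpow_of_nonpos (by linarith) (by linarith) hc

theorem integrableOn_rpow_sub_rpow_rpow (hc : c ≤ 0) (hP : 0 ≤ P) (hcP : -1 < c * P)
    (hbt : b ≤ t) :
    IntegrableOn (fun s => ((b - s) ^ c - (t - s) ^ c) ^ P) (Ioc a b) := by
  refine (integrableOn_sub_rpow_rpow hcP le_rfl).mono' (by fun_prop) ?_
  refine ae_restrict_Ioc_of_forall_mem_Ioo fun s hs => ?_
  have hk0 := sub_nonneg.2 (sub_rpow_le_sub_rpow_of_nonpos hc hbt hs.2)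
  rw [Real.norm_of_nonneg (by positivity)]
  exact Real.rpow_le_rpow hk0 (sub_le_self _ (Real.rpow_nonneg (by linarith [hs.2]) _)) hP

theorem integral_Ioc_rpow_sub_rpow_rpow_le (hc : c ≤ 0) (hP : 1 ≤ P) (hcP : -1 < c * P)
    (hab : a ≤ b) (hbt : b ≤ t) :
    ∫ s in Ioc a b, ((b - s) ^ c - (t - s) ^ c) ^ P ≤ (t - b) ^ (c * P + 1) / (c * P + 1) := by
  have hr : 0 < c * P + 1 := by linarith
  have hint := (integrableOn_sub_rpow_rpow (a := a) hcP le_rfl).sub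
    (integrableOn_sub_rpow_rpow (a := a) hcP hbt)
  calc ∫ s in Ioc a b, ((b - s) ^ c - (t - s) ^ c) ^ P
      ≤ ∫ s in Ioc a b, (((b - s) ^ c) ^ P - ((t - s) ^ c) ^ P) := by
        refine integral_mono_of_nonneg ?_ hint (ae_restrict_Ioc_of_forall_mem_Ioo fun s hs => ?_)
        · exact ae_restrict_Ioc_of_forall_mem_Ioo fun s hs =>
            Real.rpow_nonneg (sub_nonneg.2 (sub_rpow_le_sub_rpow_of_nonpos hc hbt hs.2)) P
        · exact Real.sub_rpow_le_rpow_sub_rpow (Real.rpow_nonneg (by linarith [hs.2]) c)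
            (sub_rpow_le_sub_rpow_of_nonpos hc hbt hs.2) hP
    _ = ((b - a) ^ (c * P + 1) - ((t - a) ^ (c * P + 1) - (t - b) ^ (c * P + 1))) /
          (c * P + 1) := by
        rw [integral_sub (integrableOn_sub_rpow_rpow hcP le_rfl)
            (integrableOn_sub_rpow_rpow hcP hbt),
          integral_Ioc_sub_rpow_rpow hcP hab le_rfl, integral_Ioc_sub_rpow_rpow hcP hab hbt,
          sub_self, Real.zero_rpow hr.ne', sub_zero]
        ring
    _ ≤ (t - b) ^ (c * P + 1) / (c * P + 1) := by
        gcongr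
        have : (b - a) ^ (c * P + 1) ≤ (t - a) ^ (c * P + 1) :=
          Real.rpow_le_rpow (by linarith) (by linarith) hr.le
        linarith

end Kernel

section FractionalIntegral

variable {X : Type*} [NormedAddCommGroup X] [NormedSpace ℝ X]
  {p T c a b t : ℝ} {M : ℝ → ℝ} {f : ℝ → X}

theorem intervalIntegral_sub_rpow_smul_sub {τ₁ τ₂ : ℝ} (h0 : 0 ≤ τ₁) (h12 : τ₁ ≤ τ₂)
    (hi₁ : IntegrableOn (fun s => (τ₁ - s) ^ c • f s) (Ioc 0 τ₁))
    (hi₂ : IntegrableOn (fun s => (τ₂ - s) ^ c • f s) (Ioc 0 τ₂)) :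
    (∫ s in (0 : ℝ)..τ₂, (τ₂ - s) ^ c • f s) - ∫ s in (0 : ℝ)..τ₁, (τ₁ - s) ^ c • f s =
      (∫ s in Ioc τ₁ τ₂, (τ₂ - s) ^ c • f s) -
        ∫ s in Ioc 0 τ₁, ((τ₁ - s) ^ c - (τ₂ - s) ^ c) • f s := by
  have hi₂₁ := hi₂.mono_set (Ioc_subset_Ioc_right h12)
  simp_rw [sub_smul]
  rw [intervalIntegral.integral_of_le h0, intervalIntegral.integral_of_le (h0.trans h12),
    ← Ioc_union_Ioc_eq_Ioc h0 h12,
    setIntegral_union (Ioc_disjoint_Ioc_of_le le_rfl) measurableSet_Ioc hi₂₁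
      (hi₂.mono_set (Ioc_subset_Ioc_left h0)),
    integral_sub hi₁ hi₂₁]
  abel

theorem integrableOn_sub_rpow_smul (hp0 : 0 < p) (hp1 : p < 1) (hM : Measurable M)
    (hM0 : ∀ s, 0 ≤ M s) (hMQ : IntegrableOn (fun s => M s ^ (1 / p)) (Icc 0 T))
    (hf : AEStronglyMeasurable f (volume.restrict (Icc 0 T)))
    (hfM : ∀ᵐ s ∂volume.restrict (Icc 0 T), ‖f s‖ ≤ M s)
    (hcP : -1 < c * (1 / (1 - p))) (htT : t ≤ T) :
    IntegrableOn (fun s => (t - s) ^ c • f s) (Ioc 0 t) := by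
  have hμ : volume.restrict (Ioc 0 t) ≤ volume.restrict (Icc 0 T) :=
    Measure.restrict_mono (Ioc_subset_Icc_self.trans (Icc_subset_Icc_right htT)) le_rfl
  exact integrable_smul_of_norm_le hp0 hp1 (Measurable.aestronglyMeasurable (by fun_prop))
    (ae_restrict_of_forall_mem measurableSet_Ioc fun s hs =>
      Real.rpow_nonneg (by linarith [hs.2]) c)
    (integrableOn_sub_rpow_rpow hcP le_rfl) hM.aestronglyMeasurable (ae_of_all _ hM0)
    (Integrable.mono_measure hMQ hμ) (hf.mono_measure hμ) (ae_mono hμ hfM)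

theorem norm_setIntegral_sub_rpow_smul_le (hp0 : 0 < p) (hp1 : p < 1) (hM : Measurable M)
    (hM0 : ∀ s, 0 ≤ M s) (hMQ : IntegrableOn (fun s => M s ^ (1 / p)) (Icc 0 T))
    (hfM : ∀ᵐ s ∂volume.restrict (Icc 0 T), ‖f s‖ ≤ M s)
    (hcP : -1 < c * (1 / (1 - p))) (ha : 0 ≤ a) (hat : a ≤ t) (htT : t ≤ T) :
    ‖∫ s in Ioc a t, (t - s) ^ c • f s‖ ≤
      ((t - a) ^ (c * (1 / (1 - p)) + 1) / (c * (1 / (1 - p)) + 1)) ^ (1 - p) *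
        (∫ s in Icc 0 T, M s ^ (1 / p)) ^ p := by
  have hsub : Ioc a t ⊆ Icc 0 T := fun s hs => ⟨by linarith [hs.1], hs.2.trans htT⟩
  refine (norm_setIntegral_smul_le_of_subset hsub hp0 hp1
    (Measurable.aestronglyMeasurable (by fun_prop))
    (ae_restrict_of_forall_mem measurableSet_Ioc fun s hs =>
      Real.rpow_nonneg (by linarith [hs.2]) c)
    (integrableOn_sub_rpow_rpow hcP le_rfl) hM.aestronglyMeasurable (ae_of_all _ hM0) hMQ
    hfM).trans_eq ?_
  rw [integral_Ioc_sub_rpow_rpow hcP hat le_rfl, sub_self, Real.zero_rpow (by linarith), sub_zero]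

theorem norm_setIntegral_rpow_sub_rpow_smul_le (hp0 : 0 < p) (hp1 : p < 1) (hM : Measurable M)
    (hM0 : ∀ s, 0 ≤ M s) (hMQ : IntegrableOn (fun s => M s ^ (1 / p)) (Icc 0 T))
    (hfM : ∀ᵐ s ∂volume.restrict (Icc 0 T), ‖f s‖ ≤ M s) (hc : c ≤ 0)
    (hcP : -1 < c * (1 / (1 - p))) (ha : 0 ≤ a) (hab : a ≤ b) (hbt : b ≤ t) (hbT : b ≤ T) :
    ‖∫ s in Ioc a b, ((b - s) ^ c - (t - s) ^ c) • f s‖ ≤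
      ((t - b) ^ (c * (1 / (1 - p)) + 1) / (c * (1 / (1 - p)) + 1)) ^ (1 - p) *
        (∫ s in Icc 0 T, M s ^ (1 / p)) ^ p := by
  have hsub : Ioc a b ⊆ Icc 0 T := fun s hs => ⟨by linarith [hs.1], hs.2.trans hbT⟩
  have hP : 1 ≤ 1 / (1 - p) := by rw [le_div_iff₀ (by linarith)]; linarith
  have hk0 := ae_restrict_Ioc_of_forall_mem_Ioo fun s (hs : s ∈ Ioo a b) =>
    sub_nonneg.2 (sub_rpow_le_sub_rpow_of_nonpos hc hbt hs.2)
  refine (norm_setIntegral_smul_le_of_subset hsub hp0 hp1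
    (Measurable.aestronglyMeasurable (by fun_prop)) hk0
    (integrableOn_rpow_sub_rpow_rpow hc (by linarith) hcP hbt) hM.aestronglyMeasurable
    (ae_of_all _ hM0) hMQ hfM).trans ?_
  refine mul_le_mul_of_nonneg_right (Real.rpow_le_rpow
    (integral_nonneg_of_ae (hk0.mono fun s hs => Real.rpow_nonneg hs _))
    (integral_Ioc_rpow_sub_rpow_rpow_le hc hP hcP hab hbt) (by linarith))
    (Real.rpow_nonneg (integral_nonneg fun s => Real.rpow_nonneg (hM0 s) _) _)

end FractionalIntegral

theorem fractional_convolution_holder_general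
    {X : Type*} [NormedAddCommGroup X] [NormedSpace ℝ X]
    (α p T : ℝ) (hα₂ : α < 2) (hp₀ : 0 < p) (hpα : p < α - 1)
    (M₁ : ℝ → ℝ) (hM₁meas : Measurable M₁) (hM₁nonneg : ∀ s, 0 ≤ M₁ s)
    (hM₁int : IntegrableOn (fun s => M₁ s ^ (1 / p)) (Set.Icc 0 T))
    (f : ℝ → X)
    (hfmeas : AEStronglyMeasurable f (volume.restrict (Set.Icc 0 T)))
    (hfbound : ∀ᵐ s ∂volume.restrict (Set.Icc 0 T), ‖f s‖ ≤ M₁ s)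
    (G : ℝ → X)
    (hG : ∀ t, G t = ∫ s in (0:ℝ)..t, (t - s) ^ (α - 2) • f s) :
    ∀ τ₁ τ₂ : ℝ, 0 ≤ τ₁ → τ₁ ≤ τ₂ → τ₂ ≤ T →
      ‖G τ₂ - G τ₁‖ ≤
        2 * ((1 - p) / (α - 1 - p)) ^ (1 - p) *
          (∫ s in (0:ℝ)..T, M₁ s ^ (1 / p)) ^ p * (τ₂ - τ₁) ^ (α - 1 - p) := by
  intro τ₁ τ₂ hτ₁ h₁₂ hτ₂
  have hp₁ : p < 1 := by linarith
  have hr : (α - 2) * (1 / (1 - p)) + 1 = (α - 1 - p) / (1 - p) := by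
    field_simp [(sub_pos.2 hp₁).ne']
    ring
  have hcP : -1 < (α - 2) * (1 / (1 - p)) := by
    have : 0 < (α - 1 - p) / (1 - p) := div_pos (by linarith) (by linarith)
    linarith
  have hτ₁T : τ₁ ≤ T := h₁₂.trans hτ₂
  have hK : ∫ s in (0 : ℝ)..T, M₁ s ^ (1 / p) = ∫ s in Icc 0 T, M₁ s ^ (1 / p) := by
    rw [intervalIntegral.integral_of_le (hτ₁.trans hτ₁T), integral_Icc_eq_integral_Ioc]
  rw [hK, hG, hG, intervalIntegral_sub_rpow_smul_sub hτ₁ h₁₂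
      (integrableOn_sub_rpow_smul hp₀ hp₁ hM₁meas hM₁nonneg hM₁int hfmeas hfbound hcP hτ₁T)
      (integrableOn_sub_rpow_smul hp₀ hp₁ hM₁meas hM₁nonneg hM₁int hfmeas hfbound hcP hτ₂)]
  calc _ ≤ _ := norm_sub_le _ _
    _ ≤ _ := add_le_add
        (norm_setIntegral_sub_rpow_smul_le hp₀ hp₁ hM₁meas hM₁nonneg hM₁int hfbound hcP
          hτ₁ h₁₂ hτ₂)
        (norm_setIntegral_rpow_sub_rpow_smul_le hp₀ hp₁ hM₁meas hM₁nonneg hM₁int hfbound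
          (by linarith) hcP le_rfl hτ₁ h₁₂ hτ₁T)
    _ = _ := by
        rw [hr, Real.rpow_div_div_rpow (sub_nonneg.2 h₁₂) (by linarith) (by linarith)]
        ring

/-- Hölder continuity of the fractional convolution: if `‖f(s)‖ ≤ M₁(s)` a.e. with
`M₁ ∈ L^{1/p}([0,T])` and `G(t) = ∫₀^t (t-s)^{α-2} f(s) ds`, then for
`0 ≤ τ₁ ≤ τ₂ ≤ T`,
`‖G(τ₂) - G(τ₁)‖ ≤ 2 ((1-p)/(α-1-p))^{1-p} ‖M₁‖_{1/p} (τ₂-τ₁)^{α-1-p}`. -/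
theorem fractional_convolution_holder
    {X : Type*} [NormedAddCommGroup X] [NormedSpace ℝ X] [CompleteSpace X]
    (α p T : ℝ) (hα₁ : 1 < α) (hα₂ : α < 2) (hp₀ : 0 < p) (hpα : p < α - 1)
    (hT : 0 < T)
    (M₁ : ℝ → ℝ) (hM₁meas : Measurable M₁) (hM₁nonneg : ∀ s, 0 ≤ M₁ s)
    (hM₁int : IntegrableOn (fun s => M₁ s ^ (1 / p)) (Set.Icc 0 T))
    (f : ℝ → X)
    (hfmeas : AEStronglyMeasurable f (volume.restrict (Set.Icc 0 T)))
    (hfbound : ∀ᵐ s ∂volume.restrict (Set.Icc 0 T), ‖f s‖ ≤ M₁ s)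
    (G : ℝ → X)
    (hG : ∀ t, G t = ∫ s in (0:ℝ)..t, (t - s) ^ (α - 2) • f s) :
    ∀ τ₁ τ₂ : ℝ, 0 ≤ τ₁ → τ₁ ≤ τ₂ → τ₂ ≤ T →
      ‖G τ₂ - G τ₁‖ ≤
        2 * ((1 - p) / (α - 1 - p)) ^ (1 - p) *
          (∫ s in (0:ℝ)..T, M₁ s ^ (1 / p)) ^ p * (τ₂ - τ₁) ^ (α - 1 - p) :=
  fractional_convolution_holder_general α p T hα₂ hp₀ hpα M₁ hM₁meas hM₁nonneg hM₁int f hfmeas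
    hfbound G hG
end

section
/- Let 1 < α < 2, 0 < p < α − 1 and T > 0. Let X be a Banach space and let M₁ : [0, T] → [0, ∞) be measurable with M₁ ∈ L^{1/p}([0, T]). Then the family of functions { G_f : [0, T] → X, where G_f(t) = ∫₀^t (t − s)^{α−2} f(s) ds, taken over all strongly measurable f : [0, T] → X with ‖f(s)‖ ≤ M₁(s) for almost every s } is uniformly equicontinuous on [0, T]: for every ε > 0 there exists δ > 0 such that |τ₂ − τ₁| < δ implies ‖G_f(τ₂) − G_f(τ₁)‖ < ε for every admissible f. -/
/-!
For `τ₁ ≤ τ₂`, write `G_f(τ₂) - G_f(τ₁)` as `∫_{τ₁}^{τ₂} (τ₂ - s)^β f(s) ds` minus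
`∫₀^{τ₁} ((τ₁ - s)^β - (τ₂ - s)^β) f(s) ds`, with `β = α - 2 ≤ 0`, and bound both pieces by
Hölder's inequality with exponents `q = 1/(1-p)` and `1/p`. The `q`-th power of the kernel is
`(τ - s)^{βq}`, integrable because `βq > -1` exactly when `p < β + 1`; and since
`(a - b)^q ≤ a^q - b^q` for `q ≥ 1`, the `q`-th power of the kernel difference integrates to at
most `(τ₂ - τ₁)^{βq+1}/(βq+1)`. This gives the Hölder estimate
`‖G_f(τ₂) - G_f(τ₁)‖ ≤ C ‖M₁‖_{1/p} |τ₂ - τ₁|^{β+1-p}` with `C` independent of `f`.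
-/

open MeasureTheory Set

theorem sub_rpow_le_rpow_sub_rpow {x y q : ℝ} (hy : 0 ≤ y) (hyx : y ≤ x) (hq : 1 ≤ q) :
    (x - y) ^ q ≤ x ^ q - y ^ q := by
  have := Real.add_rpow_le_rpow_add (sub_nonneg.2 hyx) hy hq
  rw [sub_add_cancel] at this
  linarith

theorem rpow_sub_rpow_rpow_le {a b β q : ℝ} (ha : 0 < a) (hab : a ≤ b) (hβ : β ≤ 0)
    (hq : 1 ≤ q) : (a ^ β - b ^ β) ^ q ≤ a ^ (β * q) - b ^ (β * q) := by
  rw [Real.rpow_mul ha.le, Real.rpow_mul (ha.le.trans hab)]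
  exact sub_rpow_le_rpow_sub_rpow (Real.rpow_nonneg (ha.le.trans hab) _)
    (Real.rpow_le_rpow_of_nonpos ha hab hβ) hq

theorem intervalIntegrable_sub_rpow {γ : ℝ} (hγ : -1 < γ) (t u v : ℝ) :
    IntervalIntegrable (fun s => (t - s) ^ γ) volume u v := by
  simpa using
    (intervalIntegral.intervalIntegrable_rpow' (a := t - u) (b := t - v) hγ).comp_sub_left t

theorem integral_sub_rpow {γ : ℝ} (hγ : -1 < γ) (t u v : ℝ) :
    ∫ s in u..v, (t - s) ^ γ = ((t - u) ^ (γ + 1) - (t - v) ^ (γ + 1)) / (γ + 1) := by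
  rw [intervalIntegral.integral_comp_sub_left (fun x => x ^ γ) t, integral_rpow (Or.inl hγ)]

theorem integral_sub_rpow_sub_sub_rpow_le {γ τ₁ τ₂ : ℝ} (hγ : -1 < γ) (hτ₁ : 0 ≤ τ₁)
    (hτ : τ₁ ≤ τ₂) :
    ∫ s in 0..τ₁, ((τ₁ - s) ^ γ - (τ₂ - s) ^ γ) ≤ (τ₂ - τ₁) ^ (γ + 1) / (γ + 1) := by
  have hmono : τ₁ ^ (γ + 1) ≤ τ₂ ^ (γ + 1) := Real.rpow_le_rpow hτ₁ hτ (by linarith)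
  rw [intervalIntegral.integral_sub (intervalIntegrable_sub_rpow hγ _ _ _)
    (intervalIntegrable_sub_rpow hγ _ _ _), integral_sub_rpow hγ, integral_sub_rpow hγ,
    sub_self, Real.zero_rpow (by linarith), sub_zero, sub_zero, sub_zero, div_sub_div_same,
    div_le_div_iff_of_pos_right (by linarith)]
  linarith

theorem neg_one_lt_mul_inv_one_sub {β p : ℝ} (hp₁ : p < 1) (hpβ : p < β + 1) :
    -1 < β * (1 - p)⁻¹ := by
  rw [← div_eq_mul_inv, lt_div_iff₀ (by linarith)]
  linarith

theorem rpow_div_exponent_rpow_one_sub {β p h : ℝ} (hh : 0 ≤ h) (hp₁ : p < 1) (hpβ : p < β + 1) :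
    (h ^ (β * (1 - p)⁻¹ + 1) / (β * (1 - p)⁻¹ + 1)) ^ (1 - p) =
      ((1 - p) / (β + 1 - p)) ^ (1 - p) * h ^ (β + 1 - p) := by
  have hexp : β * (1 - p)⁻¹ + 1 = (β + 1 - p) / (1 - p) := by
    field_simp [(by linarith : (1 : ℝ) - p ≠ 0)]
    ring
  have hpos : 0 < (β + 1 - p) / (1 - p) := div_pos (by linarith) (by linarith)
  rw [hexp, Real.div_rpow (Real.rpow_nonneg hh _) hpos.le, ← Real.rpow_mul hh,
    div_mul_cancel₀ _ (by linarith), div_eq_inv_mul, ← Real.inv_rpow hpos.le, inv_div]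

section Holder

variable {Ω E : Type*} [MeasurableSpace Ω] {μ : Measure Ω} [NormedAddCommGroup E]
  [NormedSpace ℝ E] {p q : ℝ} {k M : Ω → ℝ} {f : Ω → E}

theorem memLp_ofReal_of_integrable_rpow_s6 (hp : 0 < p) (hk : 0 ≤ᵐ[μ] k)
    (hkm : AEStronglyMeasurable k μ) (hkp : Integrable (fun x => k x ^ p) μ) :
    MemLp k (ENNReal.ofReal p) μ := by
  refine (integrable_norm_rpow_iff hkm (by simpa using hp) ENNReal.ofReal_ne_top).1 ?_
  rw [ENNReal.toReal_ofReal hp.le]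
  refine hkp.congr ?_
  filter_upwards [hk] with x hx
  rw [Real.norm_of_nonneg hx]

theorem integrable_smul_of_memLp_of_norm_le (hpq : p.HolderConjugate q)
    (hkp : MemLp k (ENNReal.ofReal p) μ) (hMq : MemLp M (ENNReal.ofReal q) μ)
    (hfm : AEStronglyMeasurable f μ) (hfM : ∀ᵐ x ∂μ, ‖f x‖ ≤ M x) :
    Integrable (fun x => k x • f x) μ := by
  have := hpq.ennrealOfReal
  refine (hkp.norm.integrable_mul hMq).mono' (hkp.1.smul hfm) ?_
  filter_upwards [hfM] with x hx
  rw [norm_smul]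
  exact mul_le_mul_of_nonneg_left hx (norm_nonneg _)

theorem norm_integral_smul_le_Lp_mul_Lq (hpq : p.HolderConjugate q) (hk : 0 ≤ᵐ[μ] k)
    (hM : 0 ≤ᵐ[μ] M) (hkp : MemLp k (ENNReal.ofReal p) μ) (hMq : MemLp M (ENNReal.ofReal q) μ)
    (hfM : ∀ᵐ x ∂μ, ‖f x‖ ≤ M x) :
    ‖∫ x, k x • f x ∂μ‖ ≤ (∫ x, k x ^ p ∂μ) ^ (1 / p) * (∫ x, M x ^ q ∂μ) ^ (1 / q) := by
  have := hpq.ennrealOfReal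
  refine (norm_integral_le_of_norm_le (hkp.integrable_mul hMq) ?_).trans
    (integral_mul_le_Lp_mul_Lq_of_nonneg hpq hk hM hkp hMq)
  filter_upwards [hk, hfM] with x hk hx
  rw [norm_smul, Real.norm_of_nonneg hk]
  exact mul_le_mul_of_nonneg_left hx hk

end Holder

section FractionalKernel

variable {E : Type*} [NormedAddCommGroup E] [NormedSpace ℝ E]

-- The kernel bounds are asked only on the open interval: at `s = t`, `(t - s) ^ β` is the junk
-- value `0 ^ β = 0`, so the kernel difference can be negative there.
theorem intervalIntegrable_smul_and_norm_integral_le {p T u v B : ℝ} (hp₀ : 0 < p) (hp₁ : p < 1)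
    (huv : u ≤ v) (hsub : Ioo u v ⊆ Icc 0 T) {k g M : ℝ → ℝ} {f : ℝ → E}
    (hkm : Measurable k) (hk : ∀ s ∈ Ioo u v, 0 ≤ k s ∧ k s ^ (1 - p)⁻¹ ≤ g s)
    (hg : IntervalIntegrable g volume u v) (hgB : ∫ s in u..v, g s ≤ B)
    (hMm : Measurable M) (hM : ∀ s, 0 ≤ M s)
    (hMp : IntegrableOn (fun s => M s ^ (1 / p)) (Icc 0 T))
    (hfm : AEStronglyMeasurable f (volume.restrict (Icc 0 T)))
    (hfM : ∀ᵐ s ∂volume.restrict (Icc 0 T), ‖f s‖ ≤ M s) :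
    IntervalIntegrable (fun s => k s • f s) volume u v ∧
      ‖∫ s in u..v, k s • f s‖ ≤ B ^ (1 - p) * (∫ s in Icc 0 T, M s ^ (1 / p)) ^ p := by
  have hpq : (1 - p)⁻¹.HolderConjugate (1 / p) := by
    simpa only [one_div] using Real.HolderConjugate.one_sub_inv_inv hp₀ hp₁
  have hk_ae : ∀ᵐ s ∂volume.restrict (Ioo u v), 0 ≤ k s ∧ k s ^ (1 - p)⁻¹ ≤ g s :=
    ae_restrict_of_forall_mem measurableSet_Ioo hk
  have hg' : IntegrableOn g (Ioo u v) := (intervalIntegrable_iff_integrableOn_Ioo_of_le huv).1 hg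
  have hkq : IntegrableOn (fun s => k s ^ (1 - p)⁻¹) (Ioo u v) := by
    refine hg'.mono' (hkm.pow_const _).aestronglyMeasurable ?_
    filter_upwards [hk_ae] with s hs
    rw [Real.norm_of_nonneg (Real.rpow_nonneg hs.1 _)]
    exact hs.2
  have hkLq := memLp_ofReal_of_integrable_rpow_s6 (by norm_num; linarith) (hk_ae.mono fun _ h => h.1)
    hkm.aestronglyMeasurable hkq
  have hMLp := memLp_ofReal_of_integrable_rpow_s6 (by positivity) (ae_of_all _ hM)
    hMm.aestronglyMeasurable (hMp.mono_set hsub)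
  have hfM' := ae_restrict_of_ae_restrict_of_subset hsub hfM
  refine ⟨(intervalIntegrable_iff_integrableOn_Ioo_of_le huv).2
    (integrable_smul_of_memLp_of_norm_le hpq hkLq hMLp (hfm.mono_measure
      (Measure.restrict_mono hsub le_rfl)) hfM'), ?_⟩
  have hkg : ∫ s in Ioo u v, k s ^ (1 - p)⁻¹ ≤ B := by
    refine le_trans ?_ hgB
    rw [intervalIntegral.integral_of_le huv, integral_Ioc_eq_integral_Ioo]
    exact setIntegral_mono_on hkq hg' measurableSet_Ioo fun s hs => (hk s hs).2
  have hMT : ∫ s in Ioo u v, M s ^ (1 / p) ≤ ∫ s in Icc 0 T, M s ^ (1 / p) :=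
    setIntegral_mono_set hMp (ae_of_all _ fun s => Real.rpow_nonneg (hM s) _) hsub.eventuallyLE
  rw [intervalIntegral.integral_of_le huv, integral_Ioc_eq_integral_Ioo]
  refine (norm_integral_smul_le_Lp_mul_Lq hpq (hk_ae.mono fun _ h => h.1) (ae_of_all _ hM)
    hkLq hMLp hfM').trans ?_
  rw [one_div_one_div, one_div, inv_inv]
  have hk₀ : 0 ≤ ∫ s in Ioo u v, k s ^ (1 - p)⁻¹ :=
    setIntegral_nonneg measurableSet_Ioo fun s hs => Real.rpow_nonneg (hk s hs).1 _
  have hM₀ : 0 ≤ ∫ s in Ioo u v, M s ^ (1 / p) :=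
    setIntegral_nonneg measurableSet_Ioo fun s _ => Real.rpow_nonneg (hM s) _
  gcongr
  exact Real.rpow_nonneg (hk₀.trans hkg) _

theorem intervalIntegrable_sub_rpow_smul_and_norm_integral_le {β p T t u v B : ℝ} (hp₀ : 0 < p)
    (hp₁ : p < 1) (hγ : -1 < β * (1 - p)⁻¹) (hu : 0 ≤ u) (huv : u ≤ v) (hvt : v ≤ t)
    (hvT : v ≤ T) (hB : ∫ s in u..v, (t - s) ^ (β * (1 - p)⁻¹) ≤ B)
    {M : ℝ → ℝ} {f : ℝ → E} (hMm : Measurable M) (hM : ∀ s, 0 ≤ M s)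
    (hMp : IntegrableOn (fun s => M s ^ (1 / p)) (Icc 0 T))
    (hfm : AEStronglyMeasurable f (volume.restrict (Icc 0 T)))
    (hfM : ∀ᵐ s ∂volume.restrict (Icc 0 T), ‖f s‖ ≤ M s) :
    IntervalIntegrable (fun s => (t - s) ^ β • f s) volume u v ∧
      ‖∫ s in u..v, (t - s) ^ β • f s‖ ≤ B ^ (1 - p) * (∫ s in Icc 0 T, M s ^ (1 / p)) ^ p :=
  intervalIntegrable_smul_and_norm_integral_le hp₀ hp₁ huv
    (fun s hs => ⟨hu.trans hs.1.le, by linarith [hs.2]⟩) (by fun_prop)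
    (fun s hs => ⟨Real.rpow_nonneg (by linarith [hs.2]) _,
      (Real.rpow_mul (by linarith [hs.2]) _ _).ge⟩)
    (intervalIntegrable_sub_rpow hγ t u v) hB hMm hM hMp hfm hfM

theorem norm_integral_sub_rpow_sub_sub_rpow_smul_le {β p T τ₁ τ₂ : ℝ} (hβ : β ≤ 0)
    (hp₀ : 0 < p) (hpβ : p < β + 1) (hτ₁ : 0 ≤ τ₁) (hτ : τ₁ ≤ τ₂) (hτ₂ : τ₂ ≤ T)
    {M : ℝ → ℝ} {f : ℝ → E} (hMm : Measurable M) (hM : ∀ s, 0 ≤ M s)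
    (hMp : IntegrableOn (fun s => M s ^ (1 / p)) (Icc 0 T))
    (hfm : AEStronglyMeasurable f (volume.restrict (Icc 0 T)))
    (hfM : ∀ᵐ s ∂volume.restrict (Icc 0 T), ‖f s‖ ≤ M s) :
    ‖∫ s in 0..τ₁, ((τ₁ - s) ^ β - (τ₂ - s) ^ β) • f s‖ ≤
      ((τ₂ - τ₁) ^ (β * (1 - p)⁻¹ + 1) / (β * (1 - p)⁻¹ + 1)) ^ (1 - p) *
        (∫ s in Icc 0 T, M s ^ (1 / p)) ^ p := by
  have hp₁ : p < 1 := by linarith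
  have hq : 1 ≤ (1 - p)⁻¹ := (one_le_inv₀ (by linarith)).2 (by linarith)
  have hγ := neg_one_lt_mul_inv_one_sub hp₁ hpβ
  exact (intervalIntegrable_smul_and_norm_integral_le hp₀ hp₁ hτ₁
    (fun s hs => ⟨hs.1.le, by linarith [hs.2]⟩) (by fun_prop)
    (fun s hs => ⟨sub_nonneg.2 (Real.rpow_le_rpow_of_nonpos (by linarith [hs.2]) (by linarith) hβ),
      rpow_sub_rpow_rpow_le (by linarith [hs.2]) (by linarith) hβ hq⟩)
    ((intervalIntegrable_sub_rpow hγ _ _ _).sub (intervalIntegrable_sub_rpow hγ _ _ _))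
    (integral_sub_rpow_sub_sub_rpow_le hγ hτ₁ hτ) hMm hM hMp hfm hfM).2

theorem norm_integral_sub_rpow_smul_sub_le_of_le {β p T τ₁ τ₂ : ℝ} (hβ : β ≤ 0) (hp₀ : 0 < p)
    (hpβ : p < β + 1) {M : ℝ → ℝ} {f : ℝ → E} (hMm : Measurable M) (hM : ∀ s, 0 ≤ M s)
    (hMp : IntegrableOn (fun s => M s ^ (1 / p)) (Icc 0 T))
    (hfm : AEStronglyMeasurable f (volume.restrict (Icc 0 T)))
    (hfM : ∀ᵐ s ∂volume.restrict (Icc 0 T), ‖f s‖ ≤ M s)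
    (hτ₁ : 0 ≤ τ₁) (hτ : τ₁ ≤ τ₂) (hτ₂ : τ₂ ≤ T) :
    ‖(∫ s in 0..τ₂, (τ₂ - s) ^ β • f s) - ∫ s in 0..τ₁, (τ₁ - s) ^ β • f s‖ ≤
      2 * ((1 - p) / (β + 1 - p)) ^ (1 - p) * (∫ s in Icc 0 T, M s ^ (1 / p)) ^ p *
        (τ₂ - τ₁) ^ (β + 1 - p) := by
  have hp₁ : p < 1 := by linarith
  have hγ := neg_one_lt_mul_inv_one_sub hp₁ hpβ
  set γ := β * (1 - p)⁻¹
  set B := (τ₂ - τ₁) ^ (γ + 1) / (γ + 1)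
  have hint {t : ℝ} (ht₁ : τ₁ ≤ t) :
      IntervalIntegrable (fun s => (t - s) ^ β • f s) volume 0 τ₁ :=
    (intervalIntegrable_sub_rpow_smul_and_norm_integral_le hp₀ hp₁ hγ le_rfl hτ₁ ht₁
      (hτ.trans hτ₂) le_rfl hMm hM hMp hfm hfM).1
  obtain ⟨htail_int, htail⟩ := intervalIntegrable_sub_rpow_smul_and_norm_integral_le hp₀ hp₁ hγ
    hτ₁ hτ le_rfl hτ₂ (B := B)
    (by rw [integral_sub_rpow hγ, sub_self, Real.zero_rpow (by linarith), sub_zero])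
    hMm hM hMp hfm hfM
  have hdiff := norm_integral_sub_rpow_sub_sub_rpow_smul_le hβ hp₀ hpβ hτ₁ hτ hτ₂ hMm hM hMp hfm hfM
  have hsplit : (∫ s in 0..τ₂, (τ₂ - s) ^ β • f s) - ∫ s in 0..τ₁, (τ₁ - s) ^ β • f s =
      (∫ s in τ₁..τ₂, (τ₂ - s) ^ β • f s) -
        ∫ s in 0..τ₁, ((τ₁ - s) ^ β - (τ₂ - s) ^ β) • f s := by
    rw [← intervalIntegral.integral_add_adjacent_intervals (hint hτ) htail_int]
    simp_rw [sub_smul]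
    rw [intervalIntegral.integral_sub (hint le_rfl) (hint hτ)]
    abel
  have hB : B ^ (1 - p) = ((1 - p) / (β + 1 - p)) ^ (1 - p) * (τ₂ - τ₁) ^ (β + 1 - p) :=
    rpow_div_exponent_rpow_one_sub (sub_nonneg.2 hτ) hp₁ hpβ
  rw [hsplit]
  calc _ ≤ B ^ (1 - p) * (∫ s in Icc 0 T, M s ^ (1 / p)) ^ p +
        B ^ (1 - p) * (∫ s in Icc 0 T, M s ^ (1 / p)) ^ p :=
        (norm_sub_le _ _).trans (add_le_add htail hdiff)
    _ = _ := by rw [hB]; ring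

theorem norm_integral_sub_rpow_smul_sub_le {β p T τ₁ τ₂ : ℝ} (hβ : β ≤ 0) (hp₀ : 0 < p)
    (hpβ : p < β + 1) {M : ℝ → ℝ} {f : ℝ → E} (hMm : Measurable M) (hM : ∀ s, 0 ≤ M s)
    (hMp : IntegrableOn (fun s => M s ^ (1 / p)) (Icc 0 T))
    (hfm : AEStronglyMeasurable f (volume.restrict (Icc 0 T)))
    (hfM : ∀ᵐ s ∂volume.restrict (Icc 0 T), ‖f s‖ ≤ M s)
    (hτ₁ : τ₁ ∈ Icc 0 T) (hτ₂ : τ₂ ∈ Icc 0 T) :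
    ‖(∫ s in 0..τ₂, (τ₂ - s) ^ β • f s) - ∫ s in 0..τ₁, (τ₁ - s) ^ β • f s‖ ≤
      2 * ((1 - p) / (β + 1 - p)) ^ (1 - p) * (∫ s in Icc 0 T, M s ^ (1 / p)) ^ p *
        |τ₂ - τ₁| ^ (β + 1 - p) := by
  rcases le_total τ₁ τ₂ with hτ | hτ
  · rw [abs_of_nonneg (sub_nonneg.2 hτ)]
    exact norm_integral_sub_rpow_smul_sub_le_of_le hβ hp₀ hpβ hMm hM hMp hfm hfM hτ₁.1 hτ hτ₂.2
  · rw [norm_sub_rev, abs_sub_comm, abs_of_nonneg (sub_nonneg.2 hτ)]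
    exact norm_integral_sub_rpow_smul_sub_le_of_le hβ hp₀ hpβ hMm hM hMp hfm hfM hτ₂.1 hτ hτ₁.2

end FractionalKernel

theorem fractional_convolution_equicontinuous_general
    {X : Type*} [NormedAddCommGroup X] [NormedSpace ℝ X]
    (α p T : ℝ) (hα₂ : α < 2) (hp₀ : 0 < p) (hpα : p < α - 1)
    (M₁ : ℝ → ℝ) (hM₁meas : Measurable M₁) (hM₁nonneg : ∀ s, 0 ≤ M₁ s)
    (hM₁int : IntegrableOn (fun s => M₁ s ^ (1 / p)) (Set.Icc 0 T)) :
    ∀ ε > (0:ℝ), ∃ δ > (0:ℝ),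
      ∀ τ₁ ∈ Set.Icc (0:ℝ) T, ∀ τ₂ ∈ Set.Icc (0:ℝ) T, |τ₂ - τ₁| < δ →
        ∀ f : ℝ → X,
          AEStronglyMeasurable f (volume.restrict (Set.Icc 0 T)) →
          (∀ᵐ s ∂volume.restrict (Set.Icc 0 T), ‖f s‖ ≤ M₁ s) →
          ‖(∫ s in (0:ℝ)..τ₂, (τ₂ - s) ^ (α - 2) • f s) -
              ∫ s in (0:ℝ)..τ₁, (τ₁ - s) ^ (α - 2) • f s‖ < ε := by
  intro ε hε
  set C := 2 * ((1 - p) / (α - 2 + 1 - p)) ^ (1 - p) * (∫ s in Icc 0 T, M₁ s ^ (1 / p)) ^ p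
  have hcont : ContinuousAt (fun h : ℝ => C * h ^ (α - 2 + 1 - p)) 0 := by
    fun_prop (disch := linarith)
  obtain ⟨δ, hδ, hsmall⟩ := Metric.continuousAt_iff.1 hcont ε hε
  refine ⟨δ, hδ, fun τ₁ hτ₁ τ₂ hτ₂ hτ f hfm hfM => ?_⟩
  have hCε : C * |τ₂ - τ₁| ^ (α - 2 + 1 - p) < ε := by
    have := hsmall (x := |τ₂ - τ₁|) (by rwa [Real.dist_0_eq_abs, abs_abs])
    rw [Real.zero_rpow (by linarith), mul_zero, Real.dist_eq, sub_zero] at this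
    exact (le_abs_self _).trans_lt this
  exact (norm_integral_sub_rpow_smul_sub_le (by linarith) hp₀ (by linarith) hM₁meas hM₁nonneg
    hM₁int hfm hfM hτ₁ hτ₂).trans_lt hCε

/-- Uniform equicontinuity of the family of fractional convolutions
`G_f(t) = ∫₀^t (t-s)^{α-2} f(s) ds` over all strongly measurable `f` dominated a.e.
by a fixed `M₁ ∈ L^{1/p}([0,T])`. -/
theorem fractional_convolution_equicontinuous
    {X : Type*} [NormedAddCommGroup X] [NormedSpace ℝ X] [CompleteSpace X]
    (α p T : ℝ) (hα₁ : 1 < α) (hα₂ : α < 2) (hp₀ : 0 < p) (hpα : p < α - 1)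
    (hT : 0 < T)
    (M₁ : ℝ → ℝ) (hM₁meas : Measurable M₁) (hM₁nonneg : ∀ s, 0 ≤ M₁ s)
    (hM₁int : IntegrableOn (fun s => M₁ s ^ (1 / p)) (Set.Icc 0 T)) :
    ∀ ε > (0:ℝ), ∃ δ > (0:ℝ),
      ∀ τ₁ ∈ Set.Icc (0:ℝ) T, ∀ τ₂ ∈ Set.Icc (0:ℝ) T, |τ₂ - τ₁| < δ →
        ∀ f : ℝ → X,
          AEStronglyMeasurable f (volume.restrict (Set.Icc 0 T)) →
          (∀ᵐ s ∂volume.restrict (Set.Icc 0 T), ‖f s‖ ≤ M₁ s) →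
          ‖(∫ s in (0:ℝ)..τ₂, (τ₂ - s) ^ (α - 2) • f s) -
              ∫ s in (0:ℝ)..τ₁, (τ₁ - s) ^ (α - 2) • f s‖ < ε :=
  fractional_convolution_equicontinuous_general α p T hα₂ hp₀ hpα M₁ hM₁meas hM₁nonneg hM₁int
end
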